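/- arXiv:1510.03354 — 3 statements merged into one kernel-verified Lean document; each statement's English description precedes it below -/
import Mathlib

section
/- Let f : E → V assign to each edge one of its endpoints, and let A_v = {u : f({v,u}) = v}. Then the total count Σ_{v ∈ V} |{{u,w} ∈ E : u ∈ A_v, w ∈ A_v}| counts each triangle of G at most once per triangle, and in general this sum is at most the total number of triangles T. -/
/-! Send a vertex `v` together with an edge `uw` inside `A_v` to the triangle `vuw`. This is
injective: `v` is recovered as the unique vertex of the triangle owning both of its edges to the
other two (an edge `vv'` is owned by only one of `v`, `v'`), and then `uw` is the rest. -/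

namespace SimpleGraph

variable {V : Type*} (G : SimpleGraph V) (f : Sym2 V → V)

/-- The set `A_v`. -/
def ownNbhd (v : V) : Set V := {u | G.Adj v u ∧ f s(v, u) = v}

variable {G f}

lemma ne_of_mem_ownNbhd {v u : V} (hu : u ∈ G.ownNbhd f v) : v ≠ u := hu.1.ne

lemma notMem_ownNbhd_of_mem_ownNbhd {v w : V} (hw : w ∈ G.ownNbhd f v) :
    v ∉ G.ownNbhd f w := fun hv =>
  ne_of_mem_ownNbhd hw (hw.2.symm.trans (Sym2.eq_swap ▸ hv.2))

variable [DecidableEq V]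

lemma insert_toFinset_mem_cliqueFinset [Fintype V] [DecidableRel G.Adj] {v : V} {e : Sym2 V}
    (he : e ∈ G.edgeSet) (hA : ∀ x ∈ e, x ∈ G.ownNbhd f v) :
    insert v e.toFinset ∈ G.cliqueFinset 3 := by
  induction e using Sym2.ind with
  | _ u w =>
    rw [Sym2.toFinset_mk_eq, mem_cliqueFinset_iff, is3Clique_triple_iff]
    exact ⟨(hA u (Sym2.mem_mk_left u w)).1, (hA w (Sym2.mem_mk_right u w)).1, he⟩

lemma eq_of_insert_toFinset_eq {v v' : V} {e e' : Sym2 V}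
    (hA : ∀ x ∈ e, x ∈ G.ownNbhd f v) (hA' : ∀ x ∈ e', x ∈ G.ownNbhd f v')
    (h : insert v e.toFinset = insert v' e'.toFinset) : v = v' ∧ e = e' := by
  have hv : v = v' := by
    by_contra hne
    have hve' : v ∈ e' := by
      simpa [hne] using h.le (Finset.mem_insert_self v e.toFinset)
    have hv'e : v' ∈ e := by
      simpa [Ne.symm hne] using h.ge (Finset.mem_insert_self v' e'.toFinset)
    exact notMem_ownNbhd_of_mem_ownNbhd (hA' v hve') (hA v' hv'e)
  subst hv
  have hnotMem {e : Sym2 V} (hA : ∀ x ∈ e, x ∈ G.ownNbhd f v) : v ∉ e.toFinset :=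
    fun hv => ne_of_mem_ownNbhd (hA v (Sym2.mem_toFinset.mp hv)) rfl
  have hfin : e.toFinset = e'.toFinset := by
    rw [← Finset.erase_insert (hnotMem hA), h, Finset.erase_insert (hnotMem hA')]
  refine ⟨rfl, Sym2.ext fun x => ?_⟩
  rw [← Sym2.mem_toFinset, hfin, Sym2.mem_toFinset]

end SimpleGraph

attribute [local instance] Classical.propDecidable

theorem stmt5_general {V : Type*} [Fintype V] [DecidableEq V] (G : SimpleGraph V)
    (f : Sym2 V → V) :
    ∑ v : V, (G.edgeFinset.filter (fun e => ∀ x ∈ e, G.Adj v x ∧ f s(v, x) = v)).card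
      ≤ (G.cliqueFinset 3).card := by
  rw [← Finset.card_sigma]
  refine Finset.card_le_card_of_injOn (fun p => insert p.1 p.2.toFinset) ?_ ?_
  · rintro ⟨v, e⟩ hp
    simp only [Finset.coe_sigma, Set.mem_sigma_iff, Finset.coe_filter,
      SimpleGraph.mem_edgeFinset] at hp
    exact SimpleGraph.insert_toFinset_mem_cliqueFinset hp.2.1 hp.2.2
  · rintro ⟨v, e⟩ hp ⟨v', e'⟩ hp' h
    simp only [Finset.coe_sigma, Set.mem_sigma_iff, Finset.coe_filter] at hp hp'
    obtain ⟨rfl, rfl⟩ := SimpleGraph.eq_of_insert_toFinset_eq hp.2.2 hp'.2.2 h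
    rfl

/-- For an endpoint assignment `f` with `A_v = {u : f {v,u} = v}`, the sum over `v`
of the number of edges with both endpoints in `A_v` is at most the number of triangles. -/
theorem stmt5 {V : Type*} [Fintype V] [DecidableEq V] (G : SimpleGraph V)
    (f : Sym2 V → V) (hf : ∀ e ∈ G.edgeSet, f e ∈ e) :
    ∑ v : V, (G.edgeFinset.filter (fun e => ∀ x ∈ e, G.Adj v x ∧ f s(v, x) = v)).card
      ≤ (G.cliqueFinset 3).card :=
  stmt5_general G f
end

section
/- In the responsible-vertex scanning process, the number of responsible vertices produced is at most |V| − 1 whenever the graph has at least one edge and is loopless. -/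
attribute [local instance] Classical.propDecidable

/-- State of the responsible-vertex scanning process. -/
structure ScanState (V : Type*) [DecidableEq V] where
  R : Finset V
  A : V → Finset V

/-- One step of the scan. -/
def scanStep {V : Type*} [DecidableEq V] (st : ScanState V) (p : V × V) : ScanState V :=
  if p.1 ∈ st.R then ⟨st.R, Function.update st.A p.1 (insert p.2 (st.A p.1))⟩
  else if p.2 ∈ st.R then ⟨st.R, Function.update st.A p.2 (insert p.1 (st.A p.2))⟩
  else ⟨insert p.1 st.R, Function.update st.A p.1 {p.2}⟩

/-- The scan over a list of edges. -/
def scanRun {V : Type*} [DecidableEq V] (l : List (V × V)) : ScanState V :=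
  l.foldl scanStep ⟨∅, fun _ => ∅⟩

/-- A step that creates a responsible vertex `p.1` leaves its partner `p.2` non-responsible,
so `R` never exhausts `V`. -/
lemma card_scanStep_R_le {V : Type*} [Fintype V] [DecidableEq V] {st : ScanState V}
    {p : V × V} (hp : p.1 ≠ p.2) (hst : st.R.card ≤ Fintype.card V - 1) :
    (scanStep st p).R.card ≤ Fintype.card V - 1 := by
  unfold scanStep
  split_ifs with _ hp2
  · exact hst
  · exact hst
  · have hfresh : p.2 ∉ insert p.1 st.R := by
      rw [Finset.mem_insert, not_or]
      exact ⟨hp.symm, hp2⟩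
    exact Nat.le_sub_one_of_lt (Finset.card_lt_univ_of_notMem hfresh)

lemma card_scanRun_R_le {V : Type*} [Fintype V] [DecidableEq V] {l : List (V × V)}
    (hl : ∀ p ∈ l, p.1 ≠ p.2) :
    (scanRun l).R.card ≤ Fintype.card V - 1 :=
  List.foldlRecOn (motive := fun st => st.R.card ≤ Fintype.card V - 1) l scanStep
    (Nat.zero_le _) fun _ hst p hp => card_scanStep_R_le (hl p hp) hst

theorem stmt7_general {V : Type*} [Fintype V] [DecidableEq V] (G : SimpleGraph V)
    (l : List (V × V))
    (h2 : ∀ e : Sym2 V, e ∈ l.map (fun p => s(p.1, p.2)) ↔ e ∈ G.edgeSet) :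
    (scanRun l).R.card ≤ Fintype.card V - 1 :=
  card_scanRun_R_le fun p hp => G.ne_of_adj ((h2 _).1 (List.mem_map_of_mem hp))

/-- If the graph has at least one edge, the number of responsible vertices produced
by the scan is at most `|V| - 1`. -/
theorem stmt7 {V : Type*} [Fintype V] [DecidableEq V] (G : SimpleGraph V)
    (l : List (V × V))
    (h1 : (l.map (fun p => s(p.1, p.2))).Nodup)
    (h2 : ∀ e : Sym2 V, e ∈ l.map (fun p => s(p.1, p.2)) ↔ e ∈ G.edgeSet)
    (hne : G.edgeFinset.Nonempty) :
    (scanRun l).R.card ≤ Fintype.card V - 1 :=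
  stmt7_general G l h2
end

section
/- If in the endpoint-assignment model every triangle is counted at at most one vertex and at least one vertex, then the pipelined triangle count Σ_v |{{u,w} ∈ E : u,w ∈ A_v}| equals the true number of triangles T; moreover for the orientation f that assigns each edge to its endpoint of lower degree (ties broken by a total order on V), every triangle is counted at exactly one vertex. -/
/-!
Summing `#{e ∈ E | e ⊆ A_v}` over `v` counts the pairs `(v, t)` with `t` a triangle counted
at `v`, because an edge `{u, w} ⊆ A_v` is the same thing as the triangle `{v, u, w}` counted
at `v`. When every triangle is counted at exactly one vertex, the sum is therefore `T`.
For the degree orientation, a triangle is counted at `v` exactly when `v` is its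
`≺`-minimum, and `≺` is the lexicographic order on `(deg v, v)`, so that minimum is unique.
-/

attribute [local instance] Classical.propDecidable

namespace SimpleGraph

open Finset

variable {V : Type*} [Fintype V] (G : SimpleGraph V)

/-- `A_v = {y | G.Adj v y ∧ P v y}`; in the paper `P v y` is `f s(v, y) = v`. -/
def IsCountedAt (P : V → V → Prop) (t : Finset V) (v : V) : Prop :=
  v ∈ t ∧ ∀ y ∈ t, y ≠ v → G.Adj v y ∧ P v y

lemma forall_mem_cliqueFinset_three {p : Finset V → Prop}
    (h : ∀ a b c, G.Adj a b → G.Adj b c → G.Adj a c → p {a, b, c}) :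
    ∀ t ∈ G.cliqueFinset 3, p t := by
  intro t ht
  obtain ⟨a, b, c, hab, hac, hbc, rfl⟩ := is3Clique_iff.1 (mem_cliqueFinset_iff.1 ht)
  exact h a b c hab hbc hac

lemma card_edges_within_eq_card_triangles_through (v : V) {p : V → Prop}
    (hp : ∀ x, p x → G.Adj v x) :
    #{e ∈ G.edgeFinset | ∀ x ∈ e, p x} =
      #{t ∈ G.cliqueFinset 3 | v ∈ t ∧ ∀ y ∈ t, y ≠ v → p y} := by
  have hv : ∀ e : Sym2 V, (∀ x ∈ e, p x) → v ∉ e.toFinset := fun e he hve =>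
    (hp v (he v (Sym2.mem_toFinset.1 hve))).ne rfl
  refine card_nbij (fun e => insert v e.toFinset) ?_ ?_ ?_
  · intro e he
    simp only [coe_filter, Set.mem_ofPred_eq, mem_edgeFinset] at he
    obtain ⟨hadj, he⟩ := he
    induction e using Sym2.ind with
    | _ x y =>
      simp only [Sym2.mem_iff, forall_eq_or_imp, forall_eq] at he
      simp only [coe_filter, Set.mem_ofPred_eq, mem_cliqueFinset_iff, Sym2.toFinset_mk_eq,
        is3Clique_triple_iff, mem_insert, mem_singleton, true_or, true_and]
      refine ⟨⟨hp x he.1, hp y he.2, hadj⟩, ?_⟩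
      rintro z (rfl | rfl | rfl) hz
      exacts [absurd rfl hz, he.1, he.2]
  · intro e he e' he' h
    simp only [coe_filter, Set.mem_ofPred_eq] at he he'
    have h := congrArg (erase · v) h
    simp only [erase_insert (hv e he.2), erase_insert (hv e' he'.2)] at h
    exact Sym2.ext fun x => by rw [← Sym2.mem_toFinset, h, Sym2.mem_toFinset]
  · intro t ht
    simp only [coe_filter, Set.mem_ofPred_eq, mem_cliqueFinset_iff] at ht
    obtain ⟨ht3, hvt, hpt⟩ := ht
    have hcard : #(t.erase v) = 2 := by rw [card_erase_of_mem hvt, ht3.card_eq]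
    obtain ⟨x, y, hxy, hxy_eq⟩ := card_eq_two.1 hcard
    have hx : x ∈ t.erase v := by simp [hxy_eq]
    have hy : y ∈ t.erase v := by simp [hxy_eq]
    refine ⟨s(x, y), ?_, ?_⟩
    · simp only [coe_filter, Set.mem_ofPred_eq, mem_edgeFinset, mem_edgeSet, Sym2.mem_iff]
      refine ⟨ht3.isClique (mem_of_mem_erase hx) (mem_of_mem_erase hy) hxy, ?_⟩
      rintro z (rfl | rfl)
      exacts [hpt z (mem_of_mem_erase hx) (ne_of_mem_erase hx),
        hpt z (mem_of_mem_erase hy) (ne_of_mem_erase hy)]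
    · simp only [Sym2.toFinset_mk_eq, ← hxy_eq, insert_erase hvt]

theorem sum_card_edges_counted_eq_card_cliqueFinset_three (P : V → V → Prop)
    (h : ∀ t ∈ G.cliqueFinset 3, ∃! v, G.IsCountedAt P t v) :
    ∑ v, #{e ∈ G.edgeFinset | ∀ x ∈ e, G.Adj v x ∧ P v x} = #(G.cliqueFinset 3) := by
  calc ∑ v, #{e ∈ G.edgeFinset | ∀ x ∈ e, G.Adj v x ∧ P v x}
      = ∑ v, #{t ∈ G.cliqueFinset 3 | G.IsCountedAt P t v} :=
        sum_congr rfl fun v _ => by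
          convert card_edges_within_eq_card_triangles_through G v
            (p := fun x => G.Adj v x ∧ P v x) fun _ h => h.1 using 3
          exact Iff.rfl
    _ = ∑ t ∈ G.cliqueFinset 3, #{v | G.IsCountedAt P t v} :=
        sum_card_bipartiteAbove_eq_sum_card_bipartiteBelow (fun v t => G.IsCountedAt P t v)
    _ = ∑ t ∈ G.cliqueFinset 3, 1 := sum_congr rfl fun t ht => by
        simpa [card_eq_one_iff_existsUnique] using h t ht
    _ = #(G.cliqueFinset 3) := by rw [card_eq_sum_ones]

omit [Fintype V] in
lemma IsClique.existsUnique_isCountedAt_of_injective {α : Type*} [LinearOrder α]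
    {t : Finset V} (ht : G.IsClique (t : Set V)) (hne : t.Nonempty) {φ : V → α}
    (hφ : Function.Injective φ) : ∃! v, G.IsCountedAt (fun u w => φ u < φ w) t v := by
  obtain ⟨v, hvt, hmin⟩ := exists_min_image t φ hne
  have hlt : ∀ y ∈ t, y ≠ v → φ v < φ y := fun y hy hyv =>
    (hmin y hy).lt_of_ne (hφ.ne hyv.symm)
  refine ⟨v, ⟨hvt, fun y hy hyv => ⟨ht hvt hy hyv.symm, hlt y hy hyv⟩⟩, ?_⟩
  rintro w ⟨hwt, hw⟩
  by_contra hwv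
  exact (hlt w hwt hwv).not_gt (hw v hvt (Ne.symm hwv)).2

lemma existsUnique_isCountedAt_degree_lt [LinearOrder V] {t : Finset V}
    (ht : t ∈ G.cliqueFinset 3) :
    ∃! v, G.IsCountedAt
      (fun u w => G.degree u < G.degree w ∨ (G.degree u = G.degree w ∧ u < w)) t v := by
  have key_injective : Function.Injective fun v => toLex (G.degree v, v) :=
    fun _ _ h => (Prod.ext_iff.1 (toLex.injective h)).2
  have ht3 := mem_cliqueFinset_iff.1 ht
  simpa only [IsCountedAt, Prod.Lex.toLex_lt_toLex] using
    ht3.isClique.existsUnique_isCountedAt_of_injective G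
      (card_pos.1 (by rw [ht3.card_eq]; norm_num)) key_injective

end SimpleGraph

/-- If in the endpoint-assignment model every triangle is counted at exactly one
vertex, the pipelined count equals the number of triangles; moreover for the
lower-degree orientation (ties broken by the order on `V`) every triangle is
counted at exactly one vertex, hence the corresponding count equals `T`. -/
theorem stmt19 {V : Type*} [Fintype V] [LinearOrder V] (G : SimpleGraph V) :
    (∀ f : Sym2 V → V, (∀ e ∈ G.edgeSet, f e ∈ e) →
      (∀ a b c : V, G.Adj a b → G.Adj b c → G.Adj a c →
        ∃! v : V, v ∈ ({a, b, c} : Finset V) ∧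
          ∀ y ∈ ({a, b, c} : Finset V), y ≠ v → (G.Adj v y ∧ f s(v, y) = v)) →
      ∑ v : V, (G.edgeFinset.filter (fun e => ∀ x ∈ e, G.Adj v x ∧ f s(v, x) = v)).card
        = (G.cliqueFinset 3).card) ∧
    (∀ a b c : V, G.Adj a b → G.Adj b c → G.Adj a c →
      ∃! v : V, v ∈ ({a, b, c} : Finset V) ∧
        ∀ y ∈ ({a, b, c} : Finset V), y ≠ v →
          (G.Adj v y ∧ (G.degree v < G.degree y ∨ (G.degree v = G.degree y ∧ v < y)))) ∧
    ∑ v : V, (G.edgeFinset.filter (fun e => ∀ x ∈ e,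
        G.Adj v x ∧ (G.degree v < G.degree x ∨ (G.degree v = G.degree x ∧ v < x)))).card
      = (G.cliqueFinset 3).card := by
  refine ⟨fun f _ hf => ?_, fun a b c hab hbc hac => ?_, ?_⟩
  · exact G.sum_card_edges_counted_eq_card_cliqueFinset_three (fun v x => f s(v, x) = v)
      (G.forall_mem_cliqueFinset_three hf)
  · exact G.existsUnique_isCountedAt_degree_lt
      (SimpleGraph.mem_cliqueFinset_iff.2 (SimpleGraph.is3Clique_triple_iff.2 ⟨hab, hac, hbc⟩))
  · convert G.sum_card_edges_counted_eq_card_cliqueFinset_three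
      (fun v x => G.degree v < G.degree x ∨ (G.degree v = G.degree x ∧ v < x))
      (fun _ => G.existsUnique_isCountedAt_degree_lt) using 4
end
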